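/- arXiv:2002.02207 — 5 statements merged into one kernel-verified Lean document; each statement's English description precedes it below -/
import Mathlib

section
/- Let (X, 𝒜, μ) be a σ-finite measure space and φ : X → (0,∞) measurable with √φ − 1 ∈ L²(μ). Then the function φ − 1 − (log φ)·1_{{|log φ| ≤ 1}} belongs to L¹(μ). -/
/-!
Write `s = √φ`, so that `φ - 1 = (s - 1)² + 2 (s - 1)` and `log φ = 2 log s`. Where `|log φ| ≤ 1`
we have `s ≥ 1/2`, and `1 - 1/s ≤ log s ≤ s - 1` gives `0 ≤ φ - 1 - log φ ≤ 5 (s - 1)²`. Where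
`|log φ| > 1` the same two bounds on `log s` force `|s - 1| ≥ 1/3`, so the linear term is dominated
by the quadratic one and `|φ - 1| ≤ 7 (s - 1)²`. Hence the function is dominated by
`7 (√φ - 1)²`, which is integrable.
-/

open MeasureTheory Real

namespace Real

lemma sub_one_sub_log_le_sq_div {s : ℝ} (hs : 0 < s) : s - 1 - log s ≤ (s - 1) ^ 2 / s := by
  have h := one_sub_inv_le_log_of_pos hs
  have h_eq : (s - 1) ^ 2 / s = s - 1 - (1 - s⁻¹) := by field_simp
  linarith

lemma half_le_of_neg_half_le_log {s : ℝ} (hs : 0 < s) (h : -(1 / 2) ≤ log s) : 1 / 2 ≤ s := by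
  by_contra! hlt
  have : log s < log (1 / 2) := log_lt_log hs hlt
  rw [one_div, log_inv] at this
  linarith [log_two_gt_d9]

lemma one_third_le_abs_sub_one_of_half_lt_abs_log {s : ℝ} (hs : 0 < s) (h : 1 / 2 < |log s|) :
    1 / 3 ≤ |s - 1| := by
  have h_upper := log_le_sub_one_of_pos hs
  have h_lower := one_sub_inv_le_log_of_pos hs
  rcases lt_abs.mp h with h | h
  · rw [abs_of_nonneg (by linarith)]
    linarith
  · have hs' : s < 2 / 3 := by
      have : 3 / 2 < s⁻¹ := by linarith
      rw [lt_inv_comm₀ (by norm_num) hs] at this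
      linarith
    rw [abs_of_neg (by linarith)]
    linarith

lemma abs_sq_sub_one_le_of_one_third_le_abs_sub_one {s : ℝ} (h : 1 / 3 ≤ |s - 1|) :
    |s ^ 2 - 1| ≤ 7 * (s - 1) ^ 2 := by
  have h_eq : s ^ 2 - 1 = (s - 1) ^ 2 + 2 * (s - 1) := by ring
  have h_lin : |2 * (s - 1)| ≤ 6 * (s - 1) ^ 2 := by
    rw [abs_mul, abs_two, ← sq_abs (s - 1)]
    nlinarith [abs_nonneg (s - 1)]
  calc |s ^ 2 - 1| ≤ |(s - 1) ^ 2| + |2 * (s - 1)| := h_eq ▸ abs_add_le _ _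
    _ ≤ 7 * (s - 1) ^ 2 := by rw [abs_of_nonneg (sq_nonneg _)]; linarith

lemma abs_sq_sub_one_sub_log_sq_le {s : ℝ} (hs : 1 / 2 ≤ s) :
    |s ^ 2 - 1 - log (s ^ 2)| ≤ 5 * (s - 1) ^ 2 := by
  have hs₀ : 0 < s := by linarith
  have h_nonneg : 0 ≤ s ^ 2 - 1 - log (s ^ 2) := by
    linarith [log_le_sub_one_of_pos (pow_pos hs₀ 2)]
  have h_eq : s ^ 2 - 1 - log (s ^ 2) = (s - 1) ^ 2 + 2 * (s - 1 - log s) := by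
    rw [log_pow]; push_cast; ring
  have h_div : (s - 1) ^ 2 / s ≤ 2 * (s - 1) ^ 2 := by
    rw [div_le_iff₀ hs₀]
    nlinarith [sq_nonneg (s - 1)]
  rw [abs_of_nonneg h_nonneg, h_eq]
  linarith [sub_one_sub_log_le_sq_div hs₀]

lemma abs_sq_sub_one_sub_truncated_log_le {s : ℝ} (hs : 0 < s) :
    |s ^ 2 - 1 - (if |log (s ^ 2)| ≤ 1 then log (s ^ 2) else 0)| ≤ 7 * (s - 1) ^ 2 := by
  have h_log : log (s ^ 2) = 2 * log s := by rw [log_pow]; push_cast; ring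
  split_ifs with h
  · have h_half : -(1 / 2) ≤ log s := by rw [h_log] at h; linarith [(abs_le.mp h).1]
    linarith [abs_sq_sub_one_sub_log_sq_le (half_le_of_neg_half_le_log hs h_half),
      sq_nonneg (s - 1)]
  · have h_half : 1 / 2 < |log s| := by
      rw [h_log, abs_mul, abs_two] at h; linarith
    rw [sub_zero]
    exact abs_sq_sub_one_le_of_one_third_le_abs_sub_one
      (one_third_le_abs_sub_one_of_half_lt_abs_log hs h_half)

end Real

theorem stmt_5_general {X : Type*} [MeasurableSpace X] (μ : Measure X)
    (φ : X → ℝ) (hφ_meas : Measurable φ) (hφ_pos : ∀ x, 0 < φ x)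
    (h2 : MemLp (fun x => Real.sqrt (φ x) - 1) 2 μ) :
    Integrable (fun x => φ x - 1 -
      (if |Real.log (φ x)| ≤ 1 then Real.log (φ x) else 0)) μ := by
  refine (h2.integrable_sq.const_mul 7).mono' ?_ (ae_of_all _ fun x => ?_)
  · have h_log := measurable_log.comp hφ_meas
    exact ((hφ_meas.sub_const 1).sub (Measurable.ite
      (measurableSet_le h_log.abs measurable_const) h_log measurable_const)).aestronglyMeasurable
  · have h := abs_sq_sub_one_sub_truncated_log_le (sqrt_pos.mpr (hφ_pos x))
    rwa [sq_sqrt (hφ_pos x).le] at h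

theorem stmt_5 {X : Type*} [MeasurableSpace X] (μ : Measure X) [SigmaFinite μ]
    (φ : X → ℝ) (hφ_meas : Measurable φ) (hφ_pos : ∀ x, 0 < φ x)
    (h2 : MemLp (fun x => Real.sqrt (φ x) - 1) 2 μ) :
    Integrable (fun x => φ x - 1 -
      (if |Real.log (φ x)| ≤ 1 then Real.log (φ x) else 0)) μ :=
  stmt_5_general μ φ hφ_meas hφ_pos h2
end

section
/- Let (X, 𝒜, μ) be a σ-finite measure space and φ : X → (0,∞) measurable with √φ − 1 ∈ L²(μ). Then ∫_X (φ − 1 − log φ) dμ (a well-defined integral in [0,∞] since the integrand is nonnegative) is finite if and only if ∫_{{|log φ| > 1}} |log φ| dμ < ∞. -/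
/-!
Write `g(t) = t - 1 - log t ≥ 0` and `A = {|log φ| > 1}`. On `A` the function `(√φ - 1)²` is bounded
below by `1/16`, so `√φ - 1 ∈ L²` forces `μ A < ∞`. Then both directions are pointwise comparisons:
`|log t| ≤ g(t) + 2` for all `t > 0`, while `g(t) ≤ 9 (√t - 1)²` for `t ≥ 1/4` and
`g(t) ≤ |log t|` with `t ∈ A` for `t < 1/4`.
-/

open MeasureTheory Real ENNReal

namespace Real

lemma abs_log_le_sub_one_sub_log_add_two {t : ℝ} (ht : 0 < t) :
    |log t| ≤ t - 1 - log t + 2 := by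
  rcases le_or_gt (log t) 0 with h | h
  · rw [abs_of_nonpos h]; linarith
  · rw [abs_of_pos h]
    have hlog_sqrt : log √t ≤ √t - 1 := log_le_sub_one_of_pos (sqrt_pos.2 ht)
    rw [log_sqrt ht.le] at hlog_sqrt
    nlinarith [sq_sqrt ht.le, sq_nonneg (√t - 2)]

/-- From `-log t ≤ 1/t - 1` we get `g(t) ≤ (t - 1)² / t = (√t - 1)² (1 + 1/√t)²`, and
`(1 + 1/√t)² ≤ 9` once `√t ≥ 1/2`. -/
lemma sub_one_sub_log_le_nine_mul_sq {t : ℝ} (ht : 1 / 4 ≤ t) :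
    t - 1 - log t ≤ 9 * (√t - 1) ^ 2 := by
  have ht0 : 0 < t := by linarith
  have hlog_inv : log t⁻¹ ≤ t⁻¹ - 1 := log_le_sub_one_of_pos (inv_pos.2 ht0)
  rw [log_inv] at hlog_inv
  have hquot : (t - 2 + t⁻¹) * t = (t - 1) ^ 2 := by field_simp; ring
  have hs : √t ^ 2 = t := sq_sqrt ht0.le
  have hs_half : 1 / 2 ≤ √t := by nlinarith [sqrt_nonneg t]
  nlinarith [mul_nonneg (sq_nonneg (√t - 1))
    (mul_nonneg (by linarith : (0 : ℝ) ≤ 2 * √t - 1) (by linarith : (0 : ℝ) ≤ 4 * √t + 1))]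

lemma sub_one_sub_log_le_abs_log {t : ℝ} (ht : t < 1) : t - 1 - log t ≤ |log t| := by
  linarith [neg_le_abs (log t)]

lemma one_lt_abs_log_of_lt_quarter {t : ℝ} (ht0 : 0 < t) (ht : t < 1 / 4) : 1 < |log t| := by
  have hlog : log t < -1 := by
    rw [log_lt_iff_lt_exp ht0]
    linarith [exp_neg_one_gt_d9]
  exact lt_abs.2 (Or.inr (by linarith))

lemma one_div_sixteen_le_sq_sqrt_sub_one {t : ℝ} (ht0 : 0 < t) (ht : 1 < |log t|) :
    1 / 16 ≤ (√t - 1) ^ 2 := by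
  have hs : √t ^ 2 = t := sq_sqrt ht0.le
  have hs0 : 0 ≤ √t := sqrt_nonneg t
  rcases lt_abs.1 ht with h | h
  · have hbig : exp 1 < t := (lt_log_iff_exp_lt ht0).1 h
    have : 5 / 4 ≤ √t := by nlinarith [exp_one_gt_d9]
    nlinarith
  · have hsmall : t < exp (-1) := (log_lt_iff_lt_exp ht0).1 (by linarith)
    have : √t ≤ 3 / 4 := by nlinarith [exp_neg_one_lt_d9]
    nlinarith

end Real

section

variable {X : Type*} [MeasurableSpace X] {μ : Measure X} {φ : X → ℝ}

lemma measure_one_lt_abs_log_lt_top (hφ_pos : ∀ x, 0 < φ x)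
    (hφ : MemLp (fun x => √(φ x) - 1) 2 μ) : μ {x | 1 < |log (φ x)|} < ∞ :=
  (measure_mono fun x hx => one_div_sixteen_le_sq_sqrt_sub_one (hφ_pos x) hx).trans_lt
    (hφ.integrable_sq.measure_ge_lt_top (by norm_num))

lemma setLIntegral_abs_log_lt_top (hφ_pos : ∀ x, 0 < φ x) {s : Set X} (hs : μ s < ∞)
    (hφ : ∫⁻ x, ENNReal.ofReal (φ x - 1 - log (φ x)) ∂μ < ∞) :
    ∫⁻ x in s, ENNReal.ofReal |log (φ x)| ∂μ < ∞ := by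
  have hle (x : X) : ENNReal.ofReal |log (φ x)| ≤ ENNReal.ofReal (φ x - 1 - log (φ x)) + 2 := by
    have hg : 0 ≤ φ x - 1 - log (φ x) := by linarith [log_le_sub_one_of_pos (hφ_pos x)]
    calc ENNReal.ofReal |log (φ x)|
        ≤ ENNReal.ofReal (φ x - 1 - log (φ x) + 2) :=
          ENNReal.ofReal_le_ofReal (abs_log_le_sub_one_sub_log_add_two (hφ_pos x))
      _ = ENNReal.ofReal (φ x - 1 - log (φ x)) + 2 := by
          rw [ENNReal.ofReal_add hg zero_le_two, ENNReal.ofReal_ofNat]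
  calc ∫⁻ x in s, ENNReal.ofReal |log (φ x)| ∂μ
      ≤ ∫⁻ x in s, (ENNReal.ofReal (φ x - 1 - log (φ x)) + 2) ∂μ := lintegral_mono hle
    _ = ∫⁻ x in s, ENNReal.ofReal (φ x - 1 - log (φ x)) ∂μ + 2 * μ s := by
        rw [lintegral_add_right _ measurable_const, setLIntegral_const]
    _ ≤ ∫⁻ x, ENNReal.ofReal (φ x - 1 - log (φ x)) ∂μ + 2 * μ s := by
        grw [setLIntegral_le_lintegral s]
    _ < ∞ := ENNReal.add_lt_top.2 ⟨hφ, ENNReal.mul_lt_top ofNat_lt_top hs⟩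

lemma lintegral_sub_one_sub_log_lt_top (hφ_pos : ∀ x, 0 < φ x)
    (hφ : MemLp (fun x => √(φ x) - 1) 2 μ)
    (hA : ∫⁻ x in {x | 1 < |log (φ x)|}, ENNReal.ofReal |log (φ x)| ∂μ < ∞) :
    ∫⁻ x, ENNReal.ofReal (φ x - 1 - log (φ x)) ∂μ < ∞ := by
  set A := {x | 1 < |log (φ x)|}
  have hle (x : X) : ENNReal.ofReal (φ x - 1 - log (φ x)) ≤
      9 * ENNReal.ofReal ((√(φ x) - 1) ^ 2)
        + A.indicator (fun x => ENNReal.ofReal |log (φ x)|) x := by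
    rcases le_or_gt (1 / 4) (φ x) with hx | hx
    · calc ENNReal.ofReal (φ x - 1 - log (φ x))
          ≤ ENNReal.ofReal (9 * (√(φ x) - 1) ^ 2) :=
            ENNReal.ofReal_le_ofReal (sub_one_sub_log_le_nine_mul_sq hx)
        _ = 9 * ENNReal.ofReal ((√(φ x) - 1) ^ 2) := by
            rw [ENNReal.ofReal_mul (by norm_num), ENNReal.ofReal_ofNat]
        _ ≤ _ := le_self_add
    · rw [Set.indicator_of_mem (show x ∈ A from one_lt_abs_log_of_lt_quarter (hφ_pos x) hx)]
      exact (ENNReal.ofReal_le_ofReal (sub_one_sub_log_le_abs_log (by linarith))).trans le_add_self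
  have hsq_meas : AEMeasurable (fun x => ENNReal.ofReal ((√(φ x) - 1) ^ 2)) μ :=
    (hφ.aestronglyMeasurable.aemeasurable.pow_const 2).ennreal_ofReal
  calc ∫⁻ x, ENNReal.ofReal (φ x - 1 - log (φ x)) ∂μ
      ≤ ∫⁻ x, (9 * ENNReal.ofReal ((√(φ x) - 1) ^ 2)
          + A.indicator (fun x => ENNReal.ofReal |log (φ x)|) x) ∂μ := lintegral_mono hle
    _ ≤ 9 * ∫⁻ x, ENNReal.ofReal ((√(φ x) - 1) ^ 2) ∂μ
          + ∫⁻ x in A, ENNReal.ofReal |log (φ x)| ∂μ := by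
        rw [lintegral_add_left' (hsq_meas.const_mul 9), lintegral_const_mul'' _ hsq_meas]
        grw [lintegral_indicator_le]
    _ < ∞ := ENNReal.add_lt_top.2
        ⟨ENNReal.mul_lt_top ofNat_lt_top hφ.integrable_sq.lintegral_lt_top, hA⟩

end

theorem stmt_6_general {X : Type*} [MeasurableSpace X] (μ : Measure X)
    (φ : X → ℝ) (hφ_pos : ∀ x, 0 < φ x) :
    MemLp (fun x => Real.sqrt (φ x) - 1) 2 μ →
    ((∫⁻ x, ENNReal.ofReal (φ x - 1 - Real.log (φ x)) ∂μ < ⊤) ↔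
      (∫⁻ x in {x | 1 < |Real.log (φ x)|}, ENNReal.ofReal |Real.log (φ x)| ∂μ < ⊤)) := fun hφ =>
  ⟨setLIntegral_abs_log_lt_top hφ_pos (measure_one_lt_abs_log_lt_top hφ_pos hφ),
    lintegral_sub_one_sub_log_lt_top hφ_pos hφ⟩

theorem stmt_6 {X : Type*} [MeasurableSpace X] (μ : Measure X) [SigmaFinite μ]
    (φ : X → ℝ) (hφ_meas : Measurable φ) (hφ_pos : ∀ x, 0 < φ x) :
    MemLp (fun x => Real.sqrt (φ x) - 1) 2 μ →
    ((∫⁻ x, ENNReal.ofReal (φ x - 1 - Real.log (φ x)) ∂μ < ⊤) ↔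
      (∫⁻ x in {x | 1 < |Real.log (φ x)|}, ENNReal.ofReal |Real.log (φ x)| ∂μ < ⊤)) :=
  stmt_6_general μ φ hφ_pos
end

section
/- Let T be a nonsingular invertible transformation of (X, 𝒜, μ) and h ∈ L²_ℝ(μ) with h ≥ −1 a.e. such that √T' · (h∘T⁻¹ + 1) = h + 1 μ-a.e., where T' = d(μ∘T⁻¹)/dμ. Then the measure ν with dν/dμ = (h+1)² is T-invariant, i.e. ν∘T⁻¹ = ν. -/
/-!
Squaring the fixed-point equation gives `(h + 1)² = T' · (h ∘ T⁻¹ + 1)²`: the density of `ν` is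
fixed by the transfer operator `g ↦ T' · g ∘ T⁻¹` of `T`, and pushing `g • μ` forward by `T` is
exactly applying that operator to `g`.
-/

open MeasureTheory ENNReal

namespace MeasureTheory.Measure

variable {α β : Type*} [MeasurableSpace α] [MeasurableSpace β]

theorem map_withDensity_comp {μ : Measure α} {f : α → β} {g : β → ℝ≥0∞}
    (hf : Measurable f) (hg : Measurable g) :
    (μ.withDensity (g ∘ f)).map f = (μ.map f).withDensity g := by
  ext s hs
  rw [map_apply hf hs, withDensity_apply _ (hf hs), withDensity_apply _ hs,
    setLIntegral_map hs hg hf]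
  rfl

theorem map_withDensity_eq_self_of_ae_eq_mul_comp {μ : Measure α} {T Tinv : α → α}
    {J g : α → ℝ≥0∞} (hT : Measurable T) (hTinv : Measurable Tinv)
    (hleft : Function.LeftInverse Tinv T) (hJ : Measurable J) (hg : Measurable g)
    (hmap : μ.map T = μ.withDensity J) (hfix : g =ᵐ[μ] J * g ∘ Tinv) :
    (μ.withDensity g).map T = μ.withDensity g := by
  have hg_comp : (g ∘ Tinv) ∘ T = g := funext fun x => congrArg g (hleft x)
  calc (μ.withDensity g).map T = (μ.map T).withDensity (g ∘ Tinv) := by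
        rw [← map_withDensity_comp hT (hg.comp hTinv), hg_comp]
    _ = μ.withDensity (J * g ∘ Tinv) := by rw [hmap, withDensity_mul _ hJ (hg.comp hTinv)]
    _ = μ.withDensity g := withDensity_congr_ae hfix.symm

end MeasureTheory.Measure

theorem stmt_13_general {X : Type*} [MeasurableSpace X] (μ : Measure X)
    (T Tinv : X → X) (hT : Measurable T) (hTinv : Measurable Tinv)
    (hleft : Function.LeftInverse Tinv T)
    (T' : X → ℝ) (hT'meas : Measurable T') (hT'pos : ∀ᵐ x ∂μ, 0 < T' x)
    (hmapT : μ.map T = μ.withDensity (fun x => ENNReal.ofReal (T' x)))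
    (h : X → ℝ) (hmeas : Measurable h)
    (hfix : ∀ᵐ x ∂μ, Real.sqrt (T' x) * (h (Tinv x) + 1) = h x + 1) :
    (μ.withDensity (fun x => ENNReal.ofReal ((h x + 1) ^ 2))).map T =
      μ.withDensity (fun x => ENNReal.ofReal ((h x + 1) ^ 2)) := by
  refine Measure.map_withDensity_eq_self_of_ae_eq_mul_comp hT hTinv hleft
    hT'meas.ennreal_ofReal ((hmeas.add_const 1).pow_const 2).ennreal_ofReal hmapT ?_
  filter_upwards [hfix, hT'pos] with x hfx hpos
  rw [← hfx, mul_pow, Real.sq_sqrt hpos.le, ENNReal.ofReal_mul hpos.le]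
  rfl

theorem stmt_13 {X : Type*} [MeasurableSpace X] (μ : Measure X) [SigmaFinite μ]
    (T Tinv : X → X) (hT : Measurable T) (hTinv : Measurable Tinv)
    (hleft : Function.LeftInverse Tinv T) (hright : Function.RightInverse Tinv T)
    (T' : X → ℝ) (hT'meas : Measurable T') (hT'pos : ∀ᵐ x ∂μ, 0 < T' x)
    (hmapT : μ.map T = μ.withDensity (fun x => ENNReal.ofReal (T' x)))
    (h : X → ℝ) (hmeas : Measurable h) (hL2 : MemLp h 2 μ)
    (hge : ∀ᵐ x ∂μ, -1 ≤ h x)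
    (hfix : ∀ᵐ x ∂μ, Real.sqrt (T' x) * (h (Tinv x) + 1) = h x + 1) :
    (μ.withDensity (fun x => ENNReal.ofReal ((h x + 1) ^ 2))).map T =
      μ.withDensity (fun x => ENNReal.ofReal ((h x + 1) ^ 2)) :=
  stmt_13_general μ T Tinv hT hTinv hleft T' hT'meas hT'pos hmapT h hmeas hfix
end

section
/- Let m be the measure on ℝ with dm/dx = 1_{(−∞,0)} + 2·1_{[0,∞)} (with respect to Lebesgue measure), and for t ∈ ℝ let T_t : ℝ → ℝ be the translation T_t(x) = x + t. Then d(m∘T_t⁻¹)/dm − 1 ∈ L¹(m), and ∫_ℝ (d(m∘T_{−t}⁻¹)/dm − 1) dm = t for every t ∈ ℝ. -/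
/-!
Translating `m = ρ · Lebesgue` by `t` gives the measure `ρ(· - t) · Lebesgue`, so the
Radon–Nikodym derivative is `ρ(x - t) / ρ(x)`, and integrating `ρ(x - t) / ρ(x) - 1` against
`ρ(x) dx` leaves `∫ (ρ(x - t) - ρ(x)) dx`. For the step density `ρ = 1` on `(-∞, 0)`, `2` on
`[0, ∞)`, the difference `ρ(x - t) - ρ(x)` is `1_{[t,0)} - 1_{[0,t)}`, whose integral is `-t`.
-/

open MeasureTheory

open scoped ENNReal

theorem ENNReal.toReal_mul_toReal_div_sub_one {a : ℝ≥0∞} (b : ℝ≥0∞) (ha₀ : a ≠ 0)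
    (ha : a ≠ ∞) : a.toReal * ((b / a).toReal - 1) = b.toReal - a.toReal := by
  have : a.toReal ≠ 0 := ENNReal.toReal_ne_zero.mpr ⟨ha₀, ha⟩
  rw [ENNReal.toReal_div]
  field_simp

namespace MeasureTheory

section RelativeDensity

variable {α : Type*} [MeasurableSpace α] {μ : Measure α} [SigmaFinite μ]
  {ρ ρ' : α → ℝ≥0∞}

theorem Measure.rnDeriv_withDensity_withDensity (hρ : Measurable ρ) (hρ' : Measurable ρ')
    (hρ₀ : ∀ x, ρ x ≠ 0) (hρ_top : ∀ x, ρ x ≠ ∞) :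
    (μ.withDensity ρ').rnDeriv (μ.withDensity ρ) =ᵐ[μ.withDensity ρ]
      fun x => ρ' x / ρ x := by
  have : SigmaFinite (μ.withDensity ρ) := SigmaFinite.withDensity_of_ne_top' hρ_top
  have hdiv : Measurable fun x => ρ' x / ρ x := hρ'.div hρ
  have hρ'_eq : ρ' = ρ * fun x => ρ' x / ρ x := by
    funext x
    exact (ENNReal.mul_div_cancel (hρ₀ x) (hρ_top x)).symm
  rw [hρ'_eq, withDensity_mul μ hρ hdiv, ← hρ'_eq]
  exact Measure.rnDeriv_withDensity _ hdiv

theorem integrable_rnDeriv_withDensity_sub_one_iff (hρ : Measurable ρ) (hρ' : Measurable ρ')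
    (hρ₀ : ∀ x, ρ x ≠ 0) (hρ_top : ∀ x, ρ x ≠ ∞) :
    Integrable (fun x => ((μ.withDensity ρ').rnDeriv (μ.withDensity ρ) x).toReal - 1)
        (μ.withDensity ρ) ↔
      Integrable (fun x => (ρ' x).toReal - (ρ x).toReal) μ := by
  rw [integrable_congr (by
      filter_upwards [Measure.rnDeriv_withDensity_withDensity hρ hρ' hρ₀ hρ_top] with x hx
      rw [hx]),
    integrable_withDensity_iff_integrable_smul' hρ (ae_of_all _ fun x => (hρ_top x).lt_top)]
  simp only [smul_eq_mul, ENNReal.toReal_mul_toReal_div_sub_one _ (hρ₀ _) (hρ_top _)]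

theorem integral_rnDeriv_withDensity_sub_one (hρ : Measurable ρ) (hρ' : Measurable ρ')
    (hρ₀ : ∀ x, ρ x ≠ 0) (hρ_top : ∀ x, ρ x ≠ ∞) :
    ∫ x, ((μ.withDensity ρ').rnDeriv (μ.withDensity ρ) x).toReal - 1 ∂μ.withDensity ρ =
      ∫ x, (ρ' x).toReal - (ρ x).toReal ∂μ := by
  rw [integral_congr_ae (by
      filter_upwards [Measure.rnDeriv_withDensity_withDensity hρ hρ' hρ₀ hρ_top] with x hx
      rw [hx]),
    integral_withDensity_eq_integral_toReal_smul hρ (ae_of_all _ fun x => (hρ_top x).lt_top)]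
  simp only [smul_eq_mul, ENNReal.toReal_mul_toReal_div_sub_one _ (hρ₀ _) (hρ_top _)]

end RelativeDensity

theorem Measure.map_add_right_withDensity {G : Type*} [MeasurableSpace G] [AddGroup G]
    [MeasurableAdd G] (μ : Measure G) [μ.IsAddRightInvariant] (ρ : G → ℝ≥0∞) (t : G) :
    (μ.withDensity ρ).map (· + t) = μ.withDensity fun x => ρ (x - t) := by
  ext s hs
  rw [Measure.map_apply (measurable_add_const t) hs, withDensity_apply _ hs,
    withDensity_apply _ (measurable_add_const t hs)]
  simpa using (measurePreserving_add_right μ t).setLIntegral_comp_preimage_emb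
    (measurableEmbedding_addRight t) (fun x => ρ (x - t)) s

end MeasureTheory

noncomputable def stepDensity (x : ℝ) : ℝ≥0∞ := if x < 0 then 1 else 2

theorem measurable_stepDensity : Measurable stepDensity :=
  Measurable.ite measurableSet_Iio measurable_const measurable_const

theorem stepDensity_ne_zero (x : ℝ) : stepDensity x ≠ 0 := by
  unfold stepDensity; split_ifs <;> simp

theorem stepDensity_ne_top (x : ℝ) : stepDensity x ≠ ∞ := by
  unfold stepDensity; split_ifs <;> simp

theorem stepDensity_sub_toReal_sub (t x : ℝ) :
    (stepDensity (x - t)).toReal - (stepDensity x).toReal =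
      (Set.Ico t 0).indicator 1 x - (Set.Ico 0 t).indicator 1 x := by
  simp only [stepDensity, Set.indicator, Set.mem_Ico, Pi.one_apply, apply_ite ENNReal.toReal,
    ENNReal.toReal_one, ENNReal.toReal_ofNat]
  split_ifs <;> grind

theorem integrable_indicator_Ico_one (a b : ℝ) :
    Integrable ((Set.Ico a b).indicator (1 : ℝ → ℝ)) :=
  (integrable_indicator_iff measurableSet_Ico).mpr (integrableOn_const (by simp))

theorem integrable_stepDensity_sub_toReal_sub (t : ℝ) :
    Integrable (fun x => (stepDensity (x - t)).toReal - (stepDensity x).toReal) := by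
  simp only [stepDensity_sub_toReal_sub]
  exact (integrable_indicator_Ico_one t 0).sub (integrable_indicator_Ico_one 0 t)

theorem integral_stepDensity_sub_toReal_sub (t : ℝ) :
    ∫ x, (stepDensity (x - t)).toReal - (stepDensity x).toReal = -t := by
  simp only [stepDensity_sub_toReal_sub]
  rw [integral_sub (integrable_indicator_Ico_one t 0) (integrable_indicator_Ico_one 0 t),
    integral_indicator_one measurableSet_Ico, integral_indicator_one measurableSet_Ico,
    Real.volume_real_Ico, Real.volume_real_Ico]
  simpa using max_zero_sub_max_neg_zero_eq_self (-t)

theorem stmt_15 (m : Measure ℝ)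
    (hm : m = MeasureTheory.volume.withDensity
      (fun x => if x < 0 then (1 : ENNReal) else 2)) :
    ∀ t : ℝ,
      Integrable (fun x => ((m.map (fun y => y + t)).rnDeriv m x).toReal - 1) m ∧
      ∫ x, (((m.map (fun y => y + (-t))).rnDeriv m x).toReal - 1) ∂m = t := by
  intro t
  rw [show m = volume.withDensity stepDensity from hm, Measure.map_add_right_withDensity,
    Measure.map_add_right_withDensity]
  have hρ' (s : ℝ) : Measurable fun x => stepDensity (x - s) :=
    measurable_stepDensity.comp (measurable_sub_const s)
  constructor
  · exact (integrable_rnDeriv_withDensity_sub_one_iff measurable_stepDensity (hρ' t)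
      stepDensity_ne_zero stepDensity_ne_top).mpr (integrable_stepDensity_sub_toReal_sub t)
  · rw [integral_rnDeriv_withDensity_sub_one measurable_stepDensity (hρ' (-t))
      stepDensity_ne_zero stepDensity_ne_top, integral_stepDensity_sub_toReal_sub, neg_neg]
end

section
/- Let (X, 𝒜, μ) be σ-finite, let T be a nonsingular invertible transformation with density T' = d(μ∘T⁻¹)/dμ such that T' − 1 ∈ L¹(μ), and let ν be a σ-finite measure equivalent to μ with dν/dμ − 1 ∈ L¹(μ). Then d(ν∘T⁻¹)/dν − 1 ∈ L¹(ν) and ∫_X (d(ν∘T⁻¹)/dν − 1) dν = ∫_X (d(μ∘T⁻¹)/dμ − 1) dμ. -/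
/-! Write `f = dν/dμ`. Transporting `ν = f • μ` by `T` gives `ν ∘ T⁻¹ = (f ∘ T⁻¹) T' • μ`, so
`f · (d(ν ∘ T⁻¹)/dν - 1) = (f ∘ T⁻¹) T' - f = T' ((f - 1) ∘ T⁻¹) + (T' - 1) - (f - 1)`.
The first and last terms have the same `μ`-integral by the change of variables `x ↦ T⁻¹ x`,
so only `∫ (T' - 1) dμ` survives. -/

open MeasureTheory

section Transport

variable {X : Type*} [MeasurableSpace X] {μ : Measure X} {T Tinv : X → X}

lemma map_withDensity_of_leftInverse (hT : Measurable T) (hTinv : Measurable Tinv)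
    (hleft : Function.LeftInverse Tinv T) {f : X → ENNReal} (hf : Measurable f) :
    (μ.withDensity f).map T = (μ.map T).withDensity (f ∘ Tinv) := by
  ext s hs
  rw [Measure.map_apply hT hs, withDensity_apply _ (hT hs), withDensity_apply _ hs,
    setLIntegral_map hs (hf.comp hTinv) hT]
  simp only [Function.comp_apply, hleft _]

variable {ρ : X → ℝ} (hT : Measurable T) (hTinv : Measurable Tinv)
  (hleft : Function.LeftInverse Tinv T) (hρ : Measurable ρ) (hρ_nonneg : 0 ≤ᵐ[μ] ρ)
  (hmap : μ.map T = μ.withDensity (fun x => ENNReal.ofReal (ρ x)))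
include hT hTinv hleft hρ hρ_nonneg hmap

lemma integral_mul_comp_of_map_eq_withDensity {h : X → ℝ} (hh : Measurable h) :
    ∫ x, ρ x * h (Tinv x) ∂μ = ∫ x, h x ∂μ := by
  calc ∫ x, ρ x * h (Tinv x) ∂μ
      = ∫ x, (ENNReal.ofReal (ρ x)).toReal • h (Tinv x) ∂μ := by
        refine integral_congr_ae ?_
        filter_upwards [hρ_nonneg] with x hx
        rw [ENNReal.toReal_ofReal hx, smul_eq_mul]
    _ = ∫ y, h (Tinv y) ∂(μ.map T) := by
        rw [hmap, integral_withDensity_eq_integral_toReal_smul hρ.ennreal_ofReal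
          (ae_of_all _ fun _ => ENNReal.ofReal_lt_top)]
    _ = ∫ x, h x ∂μ := by
        refine (integral_map hT.aemeasurable (hh.comp hTinv).aestronglyMeasurable).trans ?_
        simp only [Function.comp_apply, hleft _]

lemma integrable_mul_comp_of_map_eq_withDensity {h : X → ℝ} (hh : Measurable h)
    (hint : Integrable h μ) : Integrable (fun x => ρ x * h (Tinv x)) μ := by
  have hint_map : Integrable (h ∘ Tinv) (μ.map T) := by
    rw [integrable_map_measure (hh.comp hTinv).aestronglyMeasurable hT.aemeasurable]
    simpa only [Function.comp_def, hleft _] using hint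
  rw [hmap, integrable_withDensity_iff hρ.ennreal_ofReal
    (ae_of_all _ fun _ => ENNReal.ofReal_lt_top)] at hint_map
  refine hint_map.congr ?_
  filter_upwards [hρ_nonneg] with x hx
  rw [Function.comp_apply, ENNReal.toReal_ofReal hx, mul_comm]

omit hρ_nonneg in
lemma map_eq_withDensity_of_leftInverse {ν : Measure X} [ν.HaveLebesgueDecomposition μ]
    (hμν : ν ≪ μ) :
    ν.map T = μ.withDensity
      (fun x => ENNReal.ofReal (ρ x) * ν.rnDeriv μ (Tinv x)) := by
  conv_lhs => rw [← Measure.withDensity_rnDeriv_eq ν μ hμν]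
  rw [map_withDensity_of_leftInverse hT hTinv hleft (Measure.measurable_rnDeriv ν μ), hmap,
    ← withDensity_mul _ hρ.ennreal_ofReal ((Measure.measurable_rnDeriv ν μ).comp hTinv)]
  rfl

lemma toReal_rnDeriv_mul_rnDeriv_map_sub_one {ν : Measure X} [SigmaFinite μ] [SigmaFinite ν]
    (hμν : ν ≪ μ) (hνμ : μ ≪ ν) :
    ∀ᵐ x ∂μ, (ν.rnDeriv μ x).toReal * (((ν.map T).rnDeriv ν x).toReal - 1)
      = ρ x * (ν.rnDeriv μ (Tinv x)).toReal - (ν.rnDeriv μ x).toReal := by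
  have hrn : (ν.map T).rnDeriv ν =ᵐ[ν]
      fun x => ENNReal.ofReal (ρ x) * ν.rnDeriv μ (Tinv x) * μ.rnDeriv ν x := by
    rw [map_eq_withDensity_of_leftInverse hT hTinv hleft hρ hmap hμν]
    exact Measure.rnDeriv_withDensity_left_of_absolutelyContinuous hνμ
      (hρ.ennreal_ofReal.mul ((Measure.measurable_rnDeriv ν μ).comp hTinv)).aemeasurable
  filter_upwards [hνμ.ae_le hrn, Measure.inv_rnDeriv' hνμ, Measure.rnDeriv_pos' hνμ,
    Measure.rnDeriv_lt_top ν μ, hρ_nonneg] with x hx hinv hpos hlt hρx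
  have hf : (ν.rnDeriv μ x).toReal ≠ 0 := ENNReal.toReal_ne_zero.mpr ⟨hpos.ne', hlt.ne⟩
  rw [hx, ← hinv, Pi.inv_apply, ENNReal.toReal_mul, ENNReal.toReal_mul, ENNReal.toReal_inv,
    ENNReal.toReal_ofReal hρx]
  field_simp

end Transport

theorem stmt_16_general {X : Type*} [MeasurableSpace X] (μ ν : Measure X)
    [SigmaFinite μ] [SigmaFinite ν]
    (hμν : ν ≪ μ) (hνμ : μ ≪ ν)
    (hdens : Integrable (fun x => (ν.rnDeriv μ x).toReal - 1) μ)
    (T Tinv : X → X) (hT : Measurable T) (hTinv : Measurable Tinv)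
    (hleft : Function.LeftInverse Tinv T)
    (T' : X → ℝ) (hT'meas : Measurable T') (hT'pos : ∀ᵐ x ∂μ, 0 < T' x)
    (hmapT : μ.map T = μ.withDensity (fun x => ENNReal.ofReal (T' x)))
    (hT'int : Integrable (fun x => T' x - 1) μ) :
    Integrable (fun x => ((ν.map T).rnDeriv ν x).toReal - 1) ν ∧
    ∫ x, (((ν.map T).rnDeriv ν x).toReal - 1) ∂ν = ∫ x, (T' x - 1) ∂μ := by
  set h := fun x => (ν.rnDeriv μ x).toReal - 1
  have hh : Measurable h := (Measure.measurable_rnDeriv ν μ).ennreal_toReal.sub measurable_const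
  have hT'nonneg : 0 ≤ᵐ[μ] T' := hT'pos.mono fun _ hx => hx.le
  have hdecomp : ∀ᵐ x ∂μ, (ν.rnDeriv μ x).toReal • (((ν.map T).rnDeriv ν x).toReal - 1)
      = T' x * h (Tinv x) + (T' x - 1) - h x := by
    filter_upwards [toReal_rnDeriv_mul_rnDeriv_map_sub_one hT hTinv hleft hT'meas hT'nonneg
      hmapT hμν hνμ] with x hx
    rw [smul_eq_mul, hx]
    ring
  have hA := integrable_mul_comp_of_map_eq_withDensity hT hTinv hleft hT'meas hT'nonneg hmapT
    hh hdens
  have hsum : Integrable (fun x => T' x * h (Tinv x) + (T' x - 1) - h x) μ :=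
    (hA.add hT'int).sub hdens
  refine ⟨(integrable_rnDeriv_smul_iff hμν).mp (hsum.congr (hdecomp.mono fun _ => Eq.symm)), ?_⟩
  calc ∫ x, (((ν.map T).rnDeriv ν x).toReal - 1) ∂ν
      = ∫ x, (ν.rnDeriv μ x).toReal • (((ν.map T).rnDeriv ν x).toReal - 1) ∂μ :=
        (integral_rnDeriv_smul hμν).symm
    _ = ∫ x, (T' x * h (Tinv x) + (T' x - 1) - h x) ∂μ := integral_congr_ae hdecomp
    _ = ∫ x, (T' x - 1) ∂μ := by
        rw [integral_sub (f := fun x => T' x * h (Tinv x) + (T' x - 1)) (hA.add hT'int) hdens, integral_add hA hT'int,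
          integral_mul_comp_of_map_eq_withDensity hT hTinv hleft hT'meas hT'nonneg hmapT hh]
        ring

theorem stmt_16 {X : Type*} [MeasurableSpace X] (μ ν : Measure X)
    [SigmaFinite μ] [SigmaFinite ν]
    (hμν : ν ≪ μ) (hνμ : μ ≪ ν)
    (hdens : Integrable (fun x => (ν.rnDeriv μ x).toReal - 1) μ)
    (T Tinv : X → X) (hT : Measurable T) (hTinv : Measurable Tinv)
    (hleft : Function.LeftInverse Tinv T) (hright : Function.RightInverse Tinv T)
    (T' : X → ℝ) (hT'meas : Measurable T') (hT'pos : ∀ᵐ x ∂μ, 0 < T' x)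
    (hmapT : μ.map T = μ.withDensity (fun x => ENNReal.ofReal (T' x)))
    (hT'int : Integrable (fun x => T' x - 1) μ) :
    Integrable (fun x => ((ν.map T).rnDeriv ν x).toReal - 1) ν ∧
    ∫ x, (((ν.map T).rnDeriv ν x).toReal - 1) ∂ν = ∫ x, (T' x - 1) ∂μ :=
  stmt_16_general μ ν hμν hνμ hdens T Tinv hT hTinv hleft T' hT'meas hT'pos hmapT hT'int
end
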